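/- Let 0 < b ≤ a with a + b = 2, N = 2n, and let j be an integer with 1 ≤ j < n/a. Let λ ⊢ 2n and μ, ν ⊢ n with c^λ_{μ,ν} > 0. (a) If λ_1 = N − j, then 1 − 2aj/N ≤ Eig^λ_{μ,ν} ≤ 1 − 2bj/N + (2ab/N²)·j·(j−1). (b) If λ*_1 = N − j, then −1 + 2bj/N − (2ab/N²)·j·(j−1) + (a²+b²)/N ≤ Eig^λ_{μ,ν} ≤ −1 + 2aj/N + (a²+b²)/N. -/

import Mathlib

open scoped BigOperators

noncomputable section

namespace BRT

/-- The diagonal index `Diag(λ) = Σᵢ C(λᵢ,2) − Σᵢ C(λ*ᵢ,2)` of a Young diagram. -/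
def diag (μ : YoungDiagram) : ℤ :=
  (∑ᶠ i : ℕ, ((μ.rowLen i).choose 2 : ℤ)) - ∑ᶠ i : ℕ, ((μ.colLen i).choose 2 : ℤ)

/-- Number of entries equal to `k` in the prefix of the reverse reading word of the skew
filling `T` of shape `lam/mu` ending at position `(r, j)`: the prefix consists of the rows
`< r` entirely, together with the cells of row `r` of column index `≥ j` (rows are read
right-to-left, top to bottom). -/
def prefixCount (lam mu : YoungDiagram) (T : ℕ → ℕ → ℕ) (r j k : ℕ) : ℕ :=
  (lam.cells.filter fun c =>
    c ∉ mu.cells ∧ T c.1 c.2 = k ∧ (c.1 < r ∨ (c.1 = r ∧ j ≤ c.2))).card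

/-- `T : ℕ → ℕ → ℕ` is a Littlewood–Richardson skew tableau of shape `lam/mu` and content
`nu`: it vanishes outside the skew shape, is weakly increasing along rows and strictly
increasing along columns of the skew shape, has exactly `nu_k` entries equal to `k` for
every `k`, and every prefix of its reverse reading word contains at least as many entries
equal to `k` as entries equal to `k + 1`, for every `k` (lattice word condition). -/
def IsLR (lam mu nu : YoungDiagram) (T : ℕ → ℕ → ℕ) : Prop :=
  (∀ i j : ℕ, ¬((i, j) ∈ lam ∧ (i, j) ∉ mu) → T i j = 0) ∧
  (∀ i j1 j2 : ℕ, j1 < j2 → (i, j1) ∈ lam → (i, j1) ∉ mu → (i, j2) ∈ lam → (i, j2) ∉ mu →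
    T i j1 ≤ T i j2) ∧
  (∀ i1 i2 j : ℕ, i1 < i2 → (i1, j) ∈ lam → (i1, j) ∉ mu → (i2, j) ∈ lam → (i2, j) ∉ mu →
    T i1 j < T i2 j) ∧
  (∀ k, (lam.cells.filter fun c => c ∉ mu.cells ∧ T c.1 c.2 = k).card = nu.rowLen k) ∧
  (∀ r j k, prefixCount lam mu T r j (k + 1) ≤ prefixCount lam mu T r j k)

/-- The Littlewood–Richardson coefficient `c^λ_{μ,ν}`: the number of Littlewood–Richardson
skew tableaux of shape `λ/μ` and content `ν` (and `0` if `μ ⊄ λ`). -/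
def lrCoeff (lam mu nu : YoungDiagram) : ℕ :=
  @ite _ (mu ≤ lam) (Classical.dec _) (Nat.card {T : ℕ → ℕ → ℕ // IsLR lam mu nu T}) 0

/-- The eigenvalue `Eig^λ_{μ,ν}` of the biased random transposition shuffle in the case
`|A| = |B| = n`, `N = 2n`. -/
def eig (a b : ℝ) (n : ℕ) (lam mu nu : YoungDiagram) : ℝ :=
  (a ^ 2 + b ^ 2) / (4 * (n : ℝ)) + (a ^ 2 - a * b) / (2 * (n : ℝ) ^ 2) * (diag mu : ℝ)
    + (b ^ 2 - a * b) / (2 * (n : ℝ) ^ 2) * (diag nu : ℝ)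
    + a * b / (2 * (n : ℝ) ^ 2) * (diag lam : ℝ)

end BRT

/-!
For `μ ⊢ m` with `μ₁ = m - k`, split off the first row in `Σ C(μᵢ, 2)` and write
`Σ C(μ*ⱼ, 2) = k + Σ C(μ*ⱼ - 1, 2)` (over `j < μ₁`); superadditivity of `C(·, 2)` then gives
`C(m, 2) - m k ≤ Diag(μ) ≤ C(m, 2) - m k + k (k - 1)`.

In a Littlewood–Richardson tableau of shape `λ/μ` the first row holds only the smallest entry
(lattice condition) and the first column is strictly increasing, so `λ₁ ≤ μ₁ + ν₁` and
`λ*₁ ≤ μ*₁ + ν*₁`. In case (a) this forces `μ₁, ν₁ ≥ n - j`; as the coefficients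
`a (a - b)`, `-b (a - b)`, `a b` of `Diag(μ)`, `Diag(ν)`, `Diag(λ)` in `Eig` have fixed signs,
the bounds on the diagonal indices give (a). Transposition negates `Diag`, so
`Eig^{λ*}_{μ*,ν*} = (a² + b²)/N - Eig^λ_{μ,ν}`, and (b) is (a) for the transposed diagrams.
-/

open Finset

theorem Nat.add_choose_two (x y : ℕ) : (x + y).choose 2 = x.choose 2 + x * y + y.choose 2 := by
  induction y with
  | zero => simp
  | succ y ih =>
    rw [← add_assoc, Nat.choose_succ_succ', Nat.choose_one_right, ih, Nat.choose_succ_succ',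
      Nat.choose_one_right]
    ring

theorem Finset.sum_choose_two_le {ι : Type*} (s : Finset ι) (f : ι → ℕ) :
    ∑ i ∈ s, (f i).choose 2 ≤ (∑ i ∈ s, f i).choose 2 := by
  classical
  induction s using Finset.induction_on with
  | empty => simp
  | insert i s hi ih =>
    rw [sum_insert hi, sum_insert hi, Nat.add_choose_two]
    omega

namespace YoungDiagram

variable (μ : YoungDiagram)

theorem card_transpose : μ.transpose.card = μ.card := by
  simp [YoungDiagram.card, transpose]

theorem rowLen_zero_le_card : μ.rowLen 0 ≤ μ.card :=
  μ.rowLen_eq_card ▸ card_filter_le _ _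

theorem rowLen_eq_zero_of_colLen_zero_le {i : ℕ} (h : μ.colLen 0 ≤ i) : μ.rowLen i = 0 := by
  by_contra hi
  have := mem_iff_lt_colLen.1 (mem_iff_lt_rowLen.2 (Nat.pos_of_ne_zero hi))
  omega

theorem card_eq_sum_rowLen {t : ℕ} (ht : μ.colLen 0 ≤ t) :
    μ.card = ∑ i ∈ range t, μ.rowLen i := by
  have hfst : ∀ c ∈ μ.cells, c.1 ∈ range t := fun c hc => by
    have := mem_iff_lt_colLen.1 (μ.up_left_mem le_rfl (Nat.zero_le c.2) ((μ.mem_cells c).1 hc))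
    exact mem_range.2 (by omega)
  rw [YoungDiagram.card, card_eq_sum_card_fiberwise hfst]
  exact sum_congr rfl fun i _ => (μ.rowLen_eq_card).symm

theorem card_eq_sum_colLen {t : ℕ} (ht : μ.rowLen 0 ≤ t) :
    μ.card = ∑ j ∈ range t, μ.colLen j := by
  simpa [card_transpose, rowLen_transpose] using
    μ.transpose.card_eq_sum_rowLen (t := t) (by rwa [colLen_transpose])

theorem finsum_rowLen {M : Type*} [AddCommMonoid M] (f : ℕ → M) (hf : f 0 = 0) {t : ℕ}
    (ht : μ.colLen 0 ≤ t) : ∑ᶠ i, f (μ.rowLen i) = ∑ i ∈ range t, f (μ.rowLen i) := by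
  refine finsum_eq_sum_of_support_subset _ fun i hi => ?_
  by_contra hit
  rw [coe_range, Set.mem_Iio, not_lt] at hit
  exact hi (show f (μ.rowLen i) = 0 by rw [μ.rowLen_eq_zero_of_colLen_zero_le (ht.trans hit), hf])

theorem finsum_colLen {M : Type*} [AddCommMonoid M] (f : ℕ → M) (hf : f 0 = 0) {t : ℕ}
    (ht : μ.rowLen 0 ≤ t) : ∑ᶠ j, f (μ.colLen j) = ∑ j ∈ range t, f (μ.colLen j) := by
  simpa [rowLen_transpose] using
    μ.transpose.finsum_rowLen f hf (t := t) (by rwa [colLen_transpose])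

theorem colLen_pos_of_lt_rowLen_zero {j : ℕ} (h : j < μ.rowLen 0) : 0 < μ.colLen j :=
  mem_iff_lt_colLen.1 (mem_iff_lt_rowLen.2 h)

variable {μ} {k : ℕ}

theorem sum_choose_two_rowLen_bounds (hk : μ.rowLen 0 + k = μ.card) :
    (μ.rowLen 0).choose 2 ≤ ∑ i ∈ range (μ.colLen 0 + 1), (μ.rowLen i).choose 2 ∧
      ∑ i ∈ range (μ.colLen 0 + 1), (μ.rowLen i).choose 2 ≤ (μ.rowLen 0).choose 2 + k.choose 2 := by
  have hlower : ∑ i ∈ range (μ.colLen 0), μ.rowLen (i + 1) = k := by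
    have := μ.card_eq_sum_rowLen (Nat.le_succ _)
    rw [sum_range_succ'] at this
    omega
  have := hlower ▸ sum_choose_two_le (range (μ.colLen 0)) fun i => μ.rowLen (i + 1)
  rw [sum_range_succ']
  omega

theorem sum_choose_two_colLen_bounds (hk : μ.rowLen 0 + k = μ.card) :
    k ≤ ∑ j ∈ range (μ.rowLen 0), (μ.colLen j).choose 2 ∧
      ∑ j ∈ range (μ.rowLen 0), (μ.colLen j).choose 2 ≤ k + k.choose 2 := by
  have hcol : ∀ j ∈ range (μ.rowLen 0), μ.colLen j = (μ.colLen j - 1) + 1 := fun j hj =>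
    (Nat.sub_add_cancel (μ.colLen_pos_of_lt_rowLen_zero (mem_range.1 hj))).symm
  have hsum : ∑ j ∈ range (μ.rowLen 0), (μ.colLen j - 1) = k := by
    have := μ.card_eq_sum_colLen le_rfl
    rw [sum_congr rfl hcol, sum_add_distrib, sum_const, card_range, smul_eq_mul, mul_one] at this
    omega
  have hsplit : ∑ j ∈ range (μ.rowLen 0), (μ.colLen j).choose 2 =
      k + ∑ j ∈ range (μ.rowLen 0), (μ.colLen j - 1).choose 2 := by
    rw [← hsum, ← sum_add_distrib]
    refine sum_congr rfl fun j hj => ?_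
    rw [hcol j hj, Nat.choose_succ_succ', Nat.choose_one_right, Nat.add_sub_cancel]
  have := hsum ▸ sum_choose_two_le (range (μ.rowLen 0)) fun j => μ.colLen j - 1
  omega

end YoungDiagram

namespace BRT

open YoungDiagram

theorem diag_transpose (μ : YoungDiagram) : diag μ.transpose = -diag μ := by
  simp only [diag, rowLen_transpose, colLen_transpose]
  ring

theorem diag_bounds (μ : YoungDiagram) {m k : ℕ} (hm : μ.card = m) (hk : μ.rowLen 0 + k = m) :
    (m : ℝ) * (m - 1) / 2 - m * k ≤ diag μ ∧
      (diag μ : ℝ) ≤ (m : ℝ) * (m - 1) / 2 - m * k + k * (k - 1) := by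
  subst hm
  obtain ⟨hr₁, hr₂⟩ := sum_choose_two_rowLen_bounds hk
  obtain ⟨hc₁, hc₂⟩ := sum_choose_two_colLen_bounds hk
  have hdiag : diag μ = (∑ i ∈ range (μ.colLen 0 + 1), (μ.rowLen i).choose 2 : ℕ) -
      (∑ j ∈ range (μ.rowLen 0), (μ.colLen j).choose 2 : ℕ) := by
    rw [diag, μ.finsum_rowLen (fun r => (r.choose 2 : ℤ)) rfl (Nat.le_succ _),
      μ.finsum_colLen (fun c => (c.choose 2 : ℤ)) rfl le_rfl]
    push_cast
    rfl
  have hq : (μ.rowLen 0 : ℝ) = μ.card - k := by rw [← hk]; push_cast; ring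
  rw [hdiag]
  generalize ∑ i ∈ range (μ.colLen 0 + 1), (μ.rowLen i).choose 2 = R at *
  generalize ∑ j ∈ range (μ.rowLen 0), (μ.colLen j).choose 2 = C at *
  rify at hr₁ hr₂ hc₁ hc₂
  rw [Nat.cast_choose_two, Nat.cast_choose_two, hq] at hr₂
  rw [Nat.cast_choose_two, hq] at hr₁
  rw [Nat.cast_choose_two] at hc₂
  push_cast
  constructor <;> linarith

theorem exists_isLR_of_lrCoeff_pos {lam mu nu : YoungDiagram} (h : 0 < lrCoeff lam mu nu) :
    ∃ T, IsLR lam mu nu T := by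
  unfold lrCoeff at h
  split_ifs at h
  · obtain ⟨⟨T, hT⟩⟩ := (Nat.card_pos_iff.1 h).1
    exact ⟨T, hT⟩
  · exact absurd h (lt_irrefl 0)

namespace IsLR

variable {lam mu nu : YoungDiagram} {T : ℕ → ℕ → ℕ}

theorem eq_zero_of_mem_row_zero (hT : IsLR lam mu nu T) {c : ℕ} (hc : (0, c) ∈ lam)
    (hcμ : (0, c) ∉ mu) : T 0 c = 0 := by
  obtain ⟨-, hrow, -, -, hlattice⟩ := hT
  by_contra hne
  -- the prefix of the reading word ending at `(0, c)` contains `T 0 c` but no `0`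
  have hzero : prefixCount lam mu T 0 c 0 = 0 := by
    rw [prefixCount, card_eq_zero, filter_eq_empty_iff]
    rintro ⟨i, j⟩ hij ⟨hijμ, hTij, hprefix⟩
    obtain ⟨rfl, hcj⟩ : i = 0 ∧ c ≤ j := by omega
    rcases hcj.eq_or_lt with rfl | hlt
    · exact hne hTij
    · exact hne (Nat.le_zero.1 ((hrow 0 c j hlt hc hcμ ((mem_cells _).1 hij) hijμ).trans_eq hTij))
  have hpos : 0 < prefixCount lam mu T 0 c (T 0 c) :=
    card_pos.2 ⟨(0, c), mem_filter.2 ⟨(mem_cells _).2 hc, hcμ, rfl, Or.inr ⟨rfl, le_rfl⟩⟩⟩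
  have := antitone_nat_of_succ_le (hlattice 0 c) (Nat.zero_le (T 0 c))
  omega

theorem rowLen_zero_le (hT : IsLR lam mu nu T) :
    lam.rowLen 0 ≤ mu.rowLen 0 + nu.rowLen 0 := by
  have hmaps : Set.MapsTo (fun c => ((0 : ℕ), c)) (Ico (mu.rowLen 0) (lam.rowLen 0) : Set ℕ)
      (lam.cells.filter fun c => c ∉ mu.cells ∧ T c.1 c.2 = 0 : Set (ℕ × ℕ)) := fun c hc => by
    obtain ⟨hμc, hclam⟩ := mem_Ico.1 hc
    have hclam' : (0, c) ∈ lam := mem_iff_lt_rowLen.2 hclam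
    have hcμ : (0, c) ∉ mu := fun h => (mem_iff_lt_rowLen.1 h).not_ge hμc
    exact mem_filter.2 ⟨(mem_cells _).2 hclam', hcμ, hT.eq_zero_of_mem_row_zero hclam' hcμ⟩
  have := card_le_card_of_injOn _ hmaps fun _ _ _ _ h => (Prod.mk.inj h).2
  rw [Nat.card_Ico, hT.2.2.2.1 0] at this
  omega

theorem colLen_zero_le (hT : IsLR lam mu nu T) :
    lam.colLen 0 ≤ mu.colLen 0 + nu.colLen 0 := by
  obtain ⟨-, -, hcol, hcontent, -⟩ := hT
  have hskew : ∀ i, mu.colLen 0 ≤ i → i < lam.colLen 0 → (i, 0) ∈ lam ∧ (i, 0) ∉ mu :=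
    fun i hμi hilam => ⟨mem_iff_lt_colLen.2 hilam, fun h => (mem_iff_lt_colLen.1 h).not_ge hμi⟩
  have hgrow : ∀ i, mu.colLen 0 ≤ i → i < lam.colLen 0 → i - mu.colLen 0 ≤ T i 0 := by
    intro i hi
    induction i, hi using Nat.le_induction with
    | base => simp
    | succ i hi ih =>
      intro hilam
      have := hcol i (i + 1) 0 i.lt_succ_self (hskew i hi (by omega)).1 (hskew i hi (by omega)).2
        (hskew (i + 1) (by omega) hilam).1 (hskew (i + 1) (by omega) hilam).2
      have := ih (by omega)
      omega
  by_contra! hlt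
  obtain ⟨hbot, hbotμ⟩ := hskew (lam.colLen 0 - 1) (by omega) (by omega)
  have hv := hgrow (lam.colLen 0 - 1) (by omega) (by omega)
  have hνrow : 0 < nu.rowLen (T (lam.colLen 0 - 1) 0) :=
    hcontent _ ▸ card_pos.2 ⟨_, mem_filter.2 ⟨(mem_cells _).2 hbot, hbotμ, rfl⟩⟩
  have := mem_iff_lt_colLen.1 (mem_iff_lt_rowLen.2 hνrow)
  omega

end IsLR

theorem eig_transpose (a b : ℝ) (n : ℕ) (lam mu nu : YoungDiagram) :
    eig a b n lam.transpose mu.transpose nu.transpose =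
      (a ^ 2 + b ^ 2) / (2 * n) - eig a b n lam mu nu := by
  simp only [eig, diag_transpose, Int.cast_neg]
  ring

theorem two_mul_sq_mul_eig (a b : ℝ) {n : ℕ} (hn : n ≠ 0) (lam mu nu : YoungDiagram) :
    2 * (n : ℝ) ^ 2 * eig a b n lam mu nu = n * (a ^ 2 + b ^ 2) / 2 +
      a * (a - b) * diag mu - b * (a - b) * diag nu + a * b * diag lam := by
  unfold eig
  field_simp
  ring

theorem eig_bounds_of_rowLen_zero_le {a b : ℝ} (hb : 0 ≤ b) (hba : b ≤ a) (hab : a + b = 2)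
    {n j : ℕ} (hn : 0 < n) {lam mu nu : YoungDiagram} (hlam : lam.card = 2 * n)
    (hmu : mu.card = n) (hnu : nu.card = n) (hj : lam.rowLen 0 + j = 2 * n)
    (hrow : lam.rowLen 0 ≤ mu.rowLen 0 + nu.rowLen 0) :
    1 - 2 * a * j / (2 * (n : ℝ)) ≤ eig a b n lam mu nu ∧
      eig a b n lam mu nu ≤
        1 - 2 * b * j / (2 * (n : ℝ)) + 2 * a * b / (2 * (n : ℝ)) ^ 2 * (j * ((j : ℝ) - 1)) := by
  obtain rfl : b = 2 - a := by linarith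
  obtain ⟨kμ, hkμ⟩ := Nat.exists_eq_add_of_le (hmu ▸ mu.rowLen_zero_le_card)
  obtain ⟨kν, hkν⟩ := Nat.exists_eq_add_of_le (hnu ▸ nu.rowLen_zero_le_card)
  obtain ⟨hμ₁, hμ₂⟩ := diag_bounds mu hmu hkμ.symm
  obtain ⟨hν₁, hν₂⟩ := diag_bounds nu hnu hkν.symm
  obtain ⟨hlam₁, hlam₂⟩ := diag_bounds lam hlam hj
  have hkμj : (kμ : ℝ) ≤ j := by exact_mod_cast (by omega : kμ ≤ j)
  have hkνj : (kν : ℝ) ≤ j := by exact_mod_cast (by omega : kν ≤ j)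
  have hkμn : (kμ : ℝ) ≤ n := by exact_mod_cast (by omega : kμ ≤ n)
  have hkνn : (kν : ℝ) ≤ n := by exact_mod_cast (by omega : kν ≤ n)
  have hn' : (0 : ℝ) < n := by exact_mod_cast hn
  have hc₁ : 0 ≤ a * (a - (2 - a)) := mul_nonneg (by linarith) (by linarith)
  have hc₂ : 0 ≤ (2 - a) * (a - (2 - a)) := mul_nonneg hb (by linarith)
  have hc₃ : 0 ≤ a * (2 - a) := mul_nonneg (by linarith) hb
  have heig := two_mul_sq_mul_eig a (2 - a) hn.ne' lam mu nu
  push_cast at hlam₁ hlam₂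
  constructor
  · refine le_of_mul_le_mul_left ?_ (by positivity : (0 : ℝ) < 2 * n ^ 2)
    rw [heig, show 2 * (n : ℝ) ^ 2 * (1 - 2 * a * j / (2 * n)) = 2 * n ^ 2 - 2 * a * n * j by
      field_simp]
    linarith [mul_le_mul_of_nonneg_left hμ₁ hc₁, mul_le_mul_of_nonneg_left hν₂ hc₂,
      mul_le_mul_of_nonneg_left hlam₁ hc₃, mul_nonneg (mul_nonneg hc₁ hn'.le) (sub_nonneg.2 hkμj),
      mul_nonneg (mul_nonneg hc₂ (Nat.cast_nonneg kν)) (by linarith : (0 : ℝ) ≤ n - kν + 1)]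
  · refine le_of_mul_le_mul_left ?_ (by positivity : (0 : ℝ) < 2 * n ^ 2)
    rw [heig, show 2 * (n : ℝ) ^ 2 * (1 - 2 * (2 - a) * j / (2 * n) +
        2 * a * (2 - a) / (2 * n) ^ 2 * (j * (j - 1))) =
        2 * n ^ 2 - 2 * (2 - a) * n * j + a * (2 - a) * (j * (j - 1)) by
      field_simp]
    linarith [mul_le_mul_of_nonneg_left hμ₂ hc₁, mul_le_mul_of_nonneg_left hν₁ hc₂,
      mul_le_mul_of_nonneg_left hlam₂ hc₃, mul_nonneg (mul_nonneg hc₂ hn'.le) (sub_nonneg.2 hkνj),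
      mul_nonneg (mul_nonneg hc₁ (Nat.cast_nonneg kμ)) (by linarith : (0 : ℝ) ≤ n - kμ + 1)]

theorem eig_near_row_bounds_general (a b : ℝ) (hb : 0 < b) (hba : b ≤ a) (hab : a + b = 2)
    (n j : ℕ) (hj1 : 1 ≤ j)
    (lam mu nu : YoungDiagram) (hlam : lam.card = 2 * n) (hmu : mu.card = n)
    (hnu : nu.card = n) (hlr : 0 < lrCoeff lam mu nu) :
    (lam.rowLen 0 + j = 2 * n →
      1 - 2 * a * j / (2 * (n : ℝ)) ≤ eig a b n lam mu nu ∧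
      eig a b n lam mu nu ≤
        1 - 2 * b * j / (2 * (n : ℝ)) +
          2 * a * b / (2 * (n : ℝ)) ^ 2 * (j * ((j : ℝ) - 1))) ∧
    (lam.colLen 0 + j = 2 * n →
      -1 + 2 * b * j / (2 * (n : ℝ)) -
          2 * a * b / (2 * (n : ℝ)) ^ 2 * (j * ((j : ℝ) - 1)) +
          (a ^ 2 + b ^ 2) / (2 * (n : ℝ)) ≤ eig a b n lam mu nu ∧
      eig a b n lam mu nu ≤
        -1 + 2 * a * j / (2 * (n : ℝ)) + (a ^ 2 + b ^ 2) / (2 * (n : ℝ))) := by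
  obtain ⟨T, hT⟩ := exists_isLR_of_lrCoeff_pos hlr
  refine ⟨fun hj => ?_, fun hj => ?_⟩
  · exact eig_bounds_of_rowLen_zero_le hb.le hba hab (by omega) hlam hmu hnu hj hT.rowLen_zero_le
  · have hT' := eig_bounds_of_rowLen_zero_le hb.le hba hab (by omega)
      (lam.card_transpose.trans hlam) (mu.card_transpose.trans hmu)
      (nu.card_transpose.trans hnu) (by rwa [rowLen_transpose])
      (by simpa only [rowLen_transpose] using hT.colLen_zero_le)
    rw [eig_transpose] at hT'
    constructor <;> linarith [hT'.1, hT'.2]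

/-- Let `0 < b ≤ a`, `a + b = 2`, `N = 2n`, `1 ≤ j < n/a`, and let
`λ ⊢ 2n`, `μ, ν ⊢ n` with `c^λ_{μ,ν} > 0`.
(a) If `λ₁ = N − j` then `1 − 2aj/N ≤ Eig^λ_{μ,ν} ≤ 1 − 2bj/N + (2ab/N²) j(j−1)`.
(b) If `λ*₁ = N − j` then
`−1 + 2bj/N − (2ab/N²) j(j−1) + (a²+b²)/N ≤ Eig^λ_{μ,ν} ≤ −1 + 2aj/N + (a²+b²)/N`. -/
theorem eig_near_row_bounds (a b : ℝ) (hb : 0 < b) (hba : b ≤ a) (hab : a + b = 2)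
    (n j : ℕ) (hj1 : 1 ≤ j) (hj2 : (j : ℝ) < (n : ℝ) / a)
    (lam mu nu : YoungDiagram) (hlam : lam.card = 2 * n) (hmu : mu.card = n)
    (hnu : nu.card = n) (hlr : 0 < lrCoeff lam mu nu) :
    (lam.rowLen 0 + j = 2 * n →
      1 - 2 * a * j / (2 * (n : ℝ)) ≤ eig a b n lam mu nu ∧
      eig a b n lam mu nu ≤
        1 - 2 * b * j / (2 * (n : ℝ)) +
          2 * a * b / (2 * (n : ℝ)) ^ 2 * (j * ((j : ℝ) - 1))) ∧
    (lam.colLen 0 + j = 2 * n →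
      -1 + 2 * b * j / (2 * (n : ℝ)) -
          2 * a * b / (2 * (n : ℝ)) ^ 2 * (j * ((j : ℝ) - 1)) +
          (a ^ 2 + b ^ 2) / (2 * (n : ℝ)) ≤ eig a b n lam mu nu ∧
      eig a b n lam mu nu ≤
        -1 + 2 * a * j / (2 * (n : ℝ)) + (a ^ 2 + b ^ 2) / (2 * (n : ℝ))) :=
  eig_near_row_bounds_general a b hb hba hab n j hj1 lam mu nu hlam hmu hnu hlr

end BRT
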